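/- arXiv:2112.07537 — 3 statements merged into one kernel-verified Lean document; each statement's English description precedes it below -/
import Mathlib

section
/- Let h > 0 and let f : ℝ → ℝ be six times continuously differentiable on the interval [x - 2h, x + 3h]. Then |f(x + h/2) - ( (3/256)·f(x - 2h) - (25/256)·f(x - h) + (75/128)·f(x) + (75/128)·f(x + h) - (25/256)·f(x + 2h) + (3/256)·f(x + 3h) )| ≤ (5/1024)·h⁶·sup_{t ∈ [x-2h, x+3h]} |f⁽⁶⁾(t)|. (Detail-coefficient bound of order h^N with N = 6 for the sixth-order interpolating wavelet.) -/
/-!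
The detail functional `L f = f (x + h/2) - (prediction)` annihilates polynomials of degree `≤ 5`,
so expanding `f` by Taylor's formula with integral remainder about `a = x - 2h` leaves
`L f = (1/5!) ∫ K(t) f⁽⁶⁾(t) dt`, where `K(t) = L((· - t)₊⁵)` is the Peano kernel of `L`.
This kernel is nonpositive on `[x - 2h, x + 3h]`, hence
`|L f| ≤ (1/5!) (∫ -K) sup |f⁽⁶⁾| = (-L((· - a)⁶) / 6!) sup |f⁽⁶⁾|`,
and `L((· - a)⁶) = -(225/64) h⁶` gives the constant `5/1024`.
-/

open Set MeasureTheory intervalIntegral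
open scoped Nat

theorem iteratedDerivWithin_subset {𝕜 F : Type*} [NontriviallyNormedField 𝕜]
    [NormedAddCommGroup F] [NormedSpace 𝕜 F] {f : 𝕜 → F} {s t : Set 𝕜} {x : 𝕜} {n : ℕ}
    (st : s ⊆ t) (hs : UniqueDiffOn 𝕜 s) (ht : UniqueDiffOn 𝕜 t) (hf : ContDiffOn 𝕜 n f t)
    (hx : x ∈ s) : iteratedDerivWithin n f s x = iteratedDerivWithin n f t x := by
  simp only [iteratedDerivWithin_eq_iteratedFDerivWithin, iteratedFDerivWithin_subset st hs ht hf hx]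

theorem taylorWithinEval_subset {E : Type*} [NormedAddCommGroup E] [NormedSpace ℝ E]
    {f : ℝ → E} {s t : Set ℝ} {x₀ : ℝ} {n : ℕ} (st : s ⊆ t) (hs : UniqueDiffOn ℝ s)
    (ht : UniqueDiffOn ℝ t) (hf : ContDiffOn ℝ n f t) (hx₀ : x₀ ∈ s) (x : ℝ) :
    taylorWithinEval f n s x₀ x = taylorWithinEval f n t x₀ x := by
  simp only [taylor_within_apply]
  refine Finset.sum_congr rfl fun k hk => ?_
  rw [iteratedDerivWithin_subset st hs ht
    (hf.of_le (by exact_mod_cast Finset.mem_range_succ_iff.mp hk)) hx₀]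

theorem integral_max_sub_pow_mul_eq_zero {n : ℕ} (hn : n ≠ 0) {s b : ℝ} (hsb : s ≤ b)
    (g : ℝ → ℝ) : ∫ t in s..b, max (s - t) 0 ^ n * g t = 0 := by
  refine (integral_congr fun t ht => ?_).trans integral_zero
  rw [uIcc_of_le hsb] at ht
  simp [max_eq_right (sub_nonpos.mpr ht.1), hn]

theorem integral_max_sub_pow {n : ℕ} (hn : n ≠ 0) {a s b : ℝ} (has : a ≤ s) (hsb : s ≤ b) :
    ∫ t in a..b, max (s - t) 0 ^ n = (s - a) ^ (n + 1) / (n + 1) := by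
  have hcont : Continuous fun t : ℝ => max (s - t) 0 ^ n := by fun_prop
  have hzero : ∫ t in s..b, max (s - t) 0 ^ n = 0 := by
    simpa using integral_max_sub_pow_mul_eq_zero hn hsb 1
  rw [← integral_add_adjacent_intervals (hcont.intervalIntegrable a s)
      (hcont.intervalIntegrable s b), hzero, add_zero,
    integral_congr (g := fun t => (s - t) ^ n) fun t ht => by
      rw [uIcc_of_le has] at ht
      simp only [max_eq_left (sub_nonneg.mpr ht.2)],
    intervalIntegral.integral_comp_sub_left (fun t => t ^ n), integral_pow, sub_self,
    zero_pow n.succ_ne_zero, sub_zero]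

theorem taylor_integral_remainder_Icc {f : ℝ → ℝ} {a b s : ℝ} {n : ℕ} (hn : n ≠ 0) (hab : a < b)
    (hf : ContDiffOn ℝ (n + 1 : ℕ) f (Icc a b)) (hs : s ∈ Icc a b) :
    f s - taylorWithinEval f n (Icc a b) a s =
      (∫ t in a..b, max (s - t) 0 ^ n * iteratedDerivWithin (n + 1) f (Icc a b) t) / n ! := by
  rcases hs.1.eq_or_lt with rfl | has
  · simp [taylorWithinEval_self, integral_max_sub_pow_mul_eq_zero hn hab.le]
  have hsub : Icc a s ⊆ Icc a b := Icc_subset_Icc_right hs.2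
  have hIas : UniqueDiffOn ℝ (Icc a s) := uniqueDiffOn_Icc has
  have hIab : UniqueDiffOn ℝ (Icc a b) := uniqueDiffOn_Icc hab
  have hD : ContinuousOn (iteratedDerivWithin (n + 1) f (Icc a b)) (Icc a b) :=
    hf.continuousOn_iteratedDerivWithin le_rfl hIab
  have hint : ∀ {c d}, Icc c d ⊆ Icc a b → c ≤ d →
      IntervalIntegrable (fun t => max (s - t) 0 ^ n * iteratedDerivWithin (n + 1) f (Icc a b) t)
        volume c d := fun hcd hle =>
    ((by fun_prop : Continuous fun t : ℝ => max (s - t) 0 ^ n).continuousOn.mul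
      (hD.mono hcd)).intervalIntegrable_of_Icc hle
  have htaylor := taylor_integral_remainder (x₀ := a) (x := s)
    (hf.mono (by simpa [uIcc_of_le has.le] using hsub))
  rw [uIcc_of_le has.le, taylorWithinEval_subset hsub hIas hIab (hf.of_le (by norm_cast; omega))
    ⟨le_rfl, has.le⟩] at htaylor
  rw [htaylor, ← integral_add_adjacent_intervals (hint hsub has.le)
      (hint (Icc_subset_Icc_left hs.1) hs.2),
    integral_max_sub_pow_mul_eq_zero hn hs.2, add_zero, ← intervalIntegral.integral_div]
  refine integral_congr fun t ht => ?_
  rw [uIcc_of_le has.le] at ht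
  simp only [smul_eq_mul, iteratedDerivWithin_subset hsub hIas hIab hf ht,
    max_eq_left (sub_nonneg.mpr ht.2)]
  ring

theorem IsCompact.le_biSup_of_continuousOn {α : Type*} [TopologicalSpace α] {g : α → ℝ}
    {s : Set α} (hs : IsCompact s) (hg : ContinuousOn g s) {t : α} (ht : t ∈ s) :
    g t ≤ ⨆ u ∈ s, g u :=
  le_ciSup₂ (f := fun u (_ : u ∈ s) => g u) ((hs.bddAbove_image hg).mono <| by
    rintro _ ⟨_, ⟨u, rfl⟩, ⟨hu, rfl⟩⟩
    exact ⟨u, hu, rfl⟩) t ht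

section PeanoKernel

variable {ι : Type*} [Fintype ι]

/-- The Peano kernel `t ↦ L ((· - t)₊ⁿ)` of the functional `L g = ∑ i, w i * g (p i)`. -/
def peanoKernel (n : ℕ) (w p : ι → ℝ) (t : ℝ) : ℝ := ∑ i, w i * max (p i - t) 0 ^ n

theorem continuous_peanoKernel (n : ℕ) (w p : ι → ℝ) : Continuous (peanoKernel n w p) := by
  unfold peanoKernel
  fun_prop

theorem peanoKernel_affine (n : ℕ) (w c : ι → ℝ) {x h : ℝ} (hh : 0 < h) (t : ℝ) :
    peanoKernel n w (fun i => x + h * c i) t = h ^ n * peanoKernel n w c ((t - x) / h) := by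
  simp only [peanoKernel, Finset.mul_sum]
  refine Finset.sum_congr rfl fun i _ => ?_
  rw [show x + h * c i - t = h * (c i - (t - x) / h) by field_simp; ring,
    ← mul_zero h, ← mul_max_of_nonneg _ _ hh.le, mul_zero, mul_pow]
  ring

variable {n : ℕ} {w p : ι → ℝ} {a b : ℝ}

theorem integral_peanoKernel (hn : n ≠ 0) (hp : ∀ i, p i ∈ Icc a b) :
    ∫ t in a..b, peanoKernel n w p t = (∑ i, w i * (p i - a) ^ (n + 1)) / (n + 1) := by
  simp only [peanoKernel]
  rw [intervalIntegral.integral_finsetSum fun i _ =>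
      (by fun_prop : Continuous fun t => w i * max (p i - t) 0 ^ n).intervalIntegrable a b,
    Finset.sum_div]
  refine Finset.sum_congr rfl fun i _ => ?_
  rw [intervalIntegral.integral_const_mul, integral_max_sub_pow hn (hp i).1 (hp i).2, mul_div_assoc]

theorem sum_mul_taylorWithinEval_eq_zero (hexact : ∀ k ≤ n, ∑ i, w i * (p i - a) ^ k = 0)
    (f : ℝ → ℝ) (s : Set ℝ) : ∑ i, w i * taylorWithinEval f n s a (p i) = 0 := by
  simp only [taylor_within_apply, smul_eq_mul, Finset.mul_sum]
  rw [Finset.sum_comm]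
  refine Finset.sum_eq_zero fun k hk => ?_
  simp_rw [show ∀ i, w i * ((k ! : ℝ)⁻¹ * (p i - a) ^ k * iteratedDerivWithin k f s a) =
      (k ! : ℝ)⁻¹ * iteratedDerivWithin k f s a * (w i * (p i - a) ^ k) from fun i => by ring]
  rw [← Finset.mul_sum, hexact k (Finset.mem_range_succ_iff.mp hk), mul_zero]

variable {f : ℝ → ℝ}

theorem sum_mul_eq_integral_peanoKernel_mul (hn : n ≠ 0) (hab : a < b)
    (hf : ContDiffOn ℝ (n + 1 : ℕ) f (Icc a b)) (hp : ∀ i, p i ∈ Icc a b)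
    (hexact : ∀ k ≤ n, ∑ i, w i * (p i - a) ^ k = 0) :
    ∑ i, w i * f (p i) =
      (∫ t in a..b, peanoKernel n w p t * iteratedDerivWithin (n + 1) f (Icc a b) t) / n ! := by
  have hD : ContinuousOn (iteratedDerivWithin (n + 1) f (Icc a b)) (Icc a b) :=
    hf.continuousOn_iteratedDerivWithin le_rfl (uniqueDiffOn_Icc hab)
  have hint : ∀ i, IntervalIntegrable
      (fun t => w i * max (p i - t) 0 ^ n * iteratedDerivWithin (n + 1) f (Icc a b) t) volume a b :=
    fun i => ((by fun_prop : Continuous fun t => w i * max (p i - t) 0 ^ n).continuousOn.mul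
      hD).intervalIntegrable_of_Icc hab.le
  have htaylor : ∀ i, f (p i) = taylorWithinEval f n (Icc a b) a (p i) +
      (∫ t in a..b, max (p i - t) 0 ^ n * iteratedDerivWithin (n + 1) f (Icc a b) t) / n ! :=
    fun i => eq_add_of_sub_eq' (taylor_integral_remainder_Icc hn hab hf (hp i))
  simp only [htaylor, mul_add, Finset.sum_add_distrib, sum_mul_taylorWithinEval_eq_zero hexact,
    zero_add, peanoKernel, Finset.sum_mul]
  rw [intervalIntegral.integral_finsetSum fun i _ => hint i, Finset.sum_div]
  refine Finset.sum_congr rfl fun i _ => ?_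
  simp only [mul_assoc, intervalIntegral.integral_const_mul, mul_div_assoc]

theorem abs_sum_mul_le_of_peanoKernel_nonpos (hn : n ≠ 0) (hab : a < b)
    (hf : ContDiffOn ℝ (n + 1 : ℕ) f (Icc a b)) (hp : ∀ i, p i ∈ Icc a b)
    (hexact : ∀ k ≤ n, ∑ i, w i * (p i - a) ^ k = 0)
    (hK : ∀ t ∈ Icc a b, peanoKernel n w p t ≤ 0) {M : ℝ}
    (hM : ∀ t ∈ Icc a b, |iteratedDerivWithin (n + 1) f (Icc a b) t| ≤ M) :
    |∑ i, w i * f (p i)| ≤ -(∑ i, w i * (p i - a) ^ (n + 1)) / (n + 1)! * M := by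
  set D := iteratedDerivWithin (n + 1) f (Icc a b)
  set K := peanoKernel n w p
  have hD : ContinuousOn D (Icc a b) :=
    hf.continuousOn_iteratedDerivWithin le_rfl (uniqueDiffOn_Icc hab)
  have hmono : ∫ t in a..b, |K t * D t| ≤ ∫ t in a..b, -K t * M := by
    refine integral_mono_on hab.le
      (((continuous_peanoKernel n w p).continuousOn.mul hD).intervalIntegrable_of_Icc hab.le).abs
      (((continuous_peanoKernel n w p).neg.mul continuous_const).intervalIntegrable a b) fun t ht => ?_
    rw [abs_mul, abs_of_nonpos (hK t ht)]
    exact mul_le_mul_of_nonneg_left (hM t ht) (neg_nonneg.mpr (hK t ht))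
  have hKint : ∫ t in a..b, -K t * M = -(∑ i, w i * (p i - a) ^ (n + 1)) / (n + 1) * M := by
    rw [intervalIntegral.integral_mul_const, intervalIntegral.integral_neg,
      integral_peanoKernel hn hp, neg_div]
  rw [sum_mul_eq_integral_peanoKernel_mul hn hab hf hp hexact, abs_div, Nat.abs_cast,
    Nat.factorial_succ, Nat.cast_mul, div_le_iff₀ (by positivity)]
  calc |∫ t in a..b, K t * D t| ≤ ∫ t in a..b, |K t * D t| := abs_integral_le_integral_abs hab.le
    _ ≤ _ := hmono
    _ = _ := by rw [hKint]; field_simp; push_cast; ring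

end PeanoKernel

/-- The nodes of the detail functional on the grid normalised to `x = 0`, `h = 1`;
node `0` is the midpoint whose value is predicted from the other six. -/
noncomputable def detailNodes : Fin 7 → ℝ := ![1 / 2, -2, -1, 0, 1, 2, 3]

noncomputable def detailWeights : Fin 7 → ℝ :=
  ![1, -3 / 256, 25 / 256, -75 / 128, -75 / 128, 25 / 256, -3 / 256]

theorem sum_detailWeights_mul (g : ℝ → ℝ) :
    ∑ i, detailWeights i * g (detailNodes i) =
      g (1 / 2) - (3 / 256 * g (-2) - 25 / 256 * g (-1) + 75 / 128 * g 0 + 75 / 128 * g 1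
        - 25 / 256 * g 2 + 3 / 256 * g 3) := by
  simp only [detailWeights, detailNodes, Fin.sum_univ_seven, Fin.isValue, Matrix.cons_val_zero,
    Matrix.cons_val_one, Matrix.cons_val]
  ring

theorem detailNodes_mem_Icc (i : Fin 7) : detailNodes i ∈ Icc (-2) 3 := by
  fin_cases i <;> norm_num [detailNodes]

theorem affine_detailNodes_mem_Icc {x h : ℝ} (hh : 0 < h) (i : Fin 7) :
    x + h * detailNodes i ∈ Icc (x - 2 * h) (x + 3 * h) := by
  obtain ⟨hc₁, hc₂⟩ := detailNodes_mem_Icc i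
  constructor <;> nlinarith

/- Between consecutive nodes the kernel is a polynomial, and the negative term with the largest
base dominates the positive ones, e.g. `25 (u + 1)⁵ ≤ 3 · 2⁵ (u + 1)⁵ ≤ 3 (u + 2)⁵` on `[-1, 0]`. -/
theorem peanoKernel_detail_nonpos {u : ℝ} (hu : u ∈ Icc (-2) 3) :
    peanoKernel 5 detailWeights detailNodes u ≤ 0 := by
  obtain ⟨hu₁, hu₂⟩ := hu
  simp only [peanoKernel, detailWeights, detailNodes, Fin.sum_univ_seven, Fin.isValue,
    Matrix.cons_val_zero, Matrix.cons_val_one, Matrix.cons_val]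
  rcases le_total u (-1) with h₁ | h₁
  · rw [max_eq_left (by linarith), max_eq_right (by linarith), max_eq_left (by linarith),
      max_eq_left (by linarith), max_eq_left (by linarith), max_eq_left (by linarith),
      max_eq_left (by linarith)]
    linarith [pow_nonneg (by linarith : (0 : ℝ) ≤ u + 2) 5]
  rcases le_total u 0 with h₂ | h₂
  · rw [max_eq_left (by linarith), max_eq_right (by linarith), max_eq_right (by linarith),
      max_eq_left (by linarith), max_eq_left (by linarith), max_eq_left (by linarith),
      max_eq_left (by linarith)]
    linarith [pow_nonneg (by linarith : (0 : ℝ) ≤ u + 1) 5,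
      pow_le_pow_left₀ (by linarith) (by linarith : 2 * (u + 1) ≤ u + 2) 5]
  rcases le_total u (1 / 2) with h₃ | h₃
  · rw [max_eq_left (by linarith), max_eq_right (by linarith), max_eq_right (by linarith),
      max_eq_right (by linarith), max_eq_left (by linarith), max_eq_left (by linarith),
      max_eq_left (by linarith)]
    linarith [pow_nonneg h₂ 5, pow_nonneg (by linarith : (0 : ℝ) ≤ u + 1) 5,
      pow_le_pow_left₀ (by linarith) (by linarith : 8 / 5 * (u + 1) ≤ u + 2) 5]
  rcases le_total u 1 with h₄ | h₄
  · rw [max_eq_right (by linarith), max_eq_right (by linarith), max_eq_right (by linarith),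
      max_eq_right (by linarith), max_eq_left (by linarith), max_eq_left (by linarith),
      max_eq_left (by linarith)]
    linarith [pow_nonneg (by linarith : (0 : ℝ) ≤ 1 - u) 5,
      pow_nonneg (by linarith : (0 : ℝ) ≤ 2 - u) 5,
      pow_le_pow_left₀ (by linarith) (by linarith : 8 / 5 * (2 - u) ≤ 3 - u) 5]
  rcases le_total u 2 with h₅ | h₅
  · rw [max_eq_right (by linarith), max_eq_right (by linarith), max_eq_right (by linarith),
      max_eq_right (by linarith), max_eq_right (by linarith), max_eq_left (by linarith),
      max_eq_left (by linarith)]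
    linarith [pow_nonneg (by linarith : (0 : ℝ) ≤ 2 - u) 5,
      pow_le_pow_left₀ (by linarith) (by linarith : 2 * (2 - u) ≤ 3 - u) 5]
  · rw [max_eq_right (by linarith), max_eq_right (by linarith), max_eq_right (by linarith),
      max_eq_right (by linarith), max_eq_right (by linarith), max_eq_right (by linarith),
      max_eq_left (by linarith)]
    linarith [pow_nonneg (by linarith : (0 : ℝ) ≤ 3 - u) 5]

theorem peanoKernel_affine_detail_nonpos {x h t : ℝ} (hh : 0 < h)
    (ht : t ∈ Icc (x - 2 * h) (x + 3 * h)) :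
    peanoKernel 5 detailWeights (fun i => x + h * detailNodes i) t ≤ 0 := by
  rw [peanoKernel_affine _ _ _ hh]
  refine mul_nonpos_of_nonneg_of_nonpos (by positivity) (peanoKernel_detail_nonpos ⟨?_, ?_⟩)
  · rw [le_div_iff₀ hh]; linarith [ht.1]
  · rw [div_le_iff₀ hh]; linarith [ht.2]

/-- Detail-coefficient bound of order `h^6` for the sixth-order interpolating
wavelet: the deviation of a sample at a dyadic midpoint from the `N = 6`
Deslauriers–Dubuc prediction is bounded by `(5/1024) h⁶ sup |f⁽⁶⁾|`. -/
theorem detail_bound_order_six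
    (f : ℝ → ℝ) (x h : ℝ) (hh : 0 < h)
    (hf : ContDiffOn ℝ 6 f (Set.Icc (x - 2 * h) (x + 3 * h))) :
    |f (x + h / 2) -
        ((3 / 256) * f (x - 2 * h) - (25 / 256) * f (x - h) + (75 / 128) * f x
          + (75 / 128) * f (x + h) - (25 / 256) * f (x + 2 * h)
          + (3 / 256) * f (x + 3 * h))| ≤
      (5 / 1024) * h ^ 6 *
        ⨆ t ∈ Set.Icc (x - 2 * h) (x + 3 * h),
          |iteratedDerivWithin 6 f (Set.Icc (x - 2 * h) (x + 3 * h)) t| := by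
  set p : Fin 7 → ℝ := fun i => x + h * detailNodes i
  have hab : x - 2 * h < x + 3 * h := by linarith
  have hexact : ∀ k ≤ 5, ∑ i, detailWeights i * (p i - (x - 2 * h)) ^ k = 0 := by
    intro k hk
    rw [sum_detailWeights_mul fun c => (x + h * c - (x - 2 * h)) ^ k]
    interval_cases k <;> ring
  have hM (t : ℝ) := isCompact_Icc.le_biSup_of_continuousOn (t := t)
    (hf.continuousOn_iteratedDerivWithin le_rfl (uniqueDiffOn_Icc hab)).abs
  calc _ = |∑ i, detailWeights i * f (p i)| := by
        rw [sum_detailWeights_mul fun c => f (x + h * c)]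
        ring_nf
    _ ≤ _ := abs_sum_mul_le_of_peanoKernel_nonpos (by norm_num) hab hf
      (affine_detailNodes_mem_Icc hh) hexact (fun t => peanoKernel_affine_detail_nonpos hh) hM
    _ = _ := by
        congr 1
        rw [sum_detailWeights_mul fun c => (x + h * c - (x - 2 * h)) ^ (5 + 1)]
        simp only [Nat.factorial]
        push_cast
        ring
end

section
/- Let λ : ℤ → ℝ be finitely supported and let λ' be its coarse scaling coefficients under the 6.2 forward wavelet transform. Then Σ_{j∈ℤ} λ(j) = 2·Σ_{k∈ℤ} λ'(k). (Conservation of the zeroth discrete moment across levels by the lifted sixth-order interpolating wavelet.) -/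
/-!
Both lifting steps add to a function a finite linear combination of translates of another one,
so they change its sum by the sum of the weights times the sum of the other function. Writing
`E`, `O` for the sums of the even and odd samples of `λ`, the predict weights sum to `-1` and the
update weights to `1/2`, hence `∑ γ = O - E` and `∑ λ' = E + (O - E) / 2 = (E + O) / 2`.
-/

open Function

section LiftingStep

variable {G R ι : Type*} [AddGroup G] [Semiring R] [Fintype ι]

def liftingStep (f g : G → R) (c : ι → R) (t : ι → G) : G → R :=
  fun m => f m + ∑ i, c i * g (m + t i)

theorem finsum_comp_add_right {M : Type*} [AddCommMonoid M] (f : G → M) (t : G) :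
    ∑ᶠ m, f (m + t) = ∑ᶠ m, f m :=
  finsum_comp_equiv (Equiv.addRight t)

theorem Function.HasFiniteSupport.comp_add_right {M : Type*} [Zero M] {f : G → M}
    (hf : f.HasFiniteSupport) (t : G) : HasFiniteSupport fun m => f (m + t) :=
  hf.comp_of_injective (add_left_injective t)

theorem Function.HasFiniteSupport.liftingStep {f g : G → R} (hf : f.HasFiniteSupport)
    (hg : g.HasFiniteSupport) (c : ι → R) (t : ι → G) :
    (liftingStep f g c t).HasFiniteSupport :=
  hf.add <| .sum (fun i => (hg.comp_add_right (t i)).mul_right fun _ => c i) _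

theorem finsum_liftingStep {f g : G → R} (hf : f.HasFiniteSupport) (hg : g.HasFiniteSupport)
    (c : ι → R) (t : ι → G) :
    ∑ᶠ m, liftingStep f g c t m = ∑ᶠ m, f m + (∑ i, c i) * ∑ᶠ m, g m := by
  have hterm (i : ι) : HasFiniteSupport fun m => c i * g (m + t i) :=
    (hg.comp_add_right (t i)).mul_right fun _ => c i
  unfold liftingStep
  rw [finsum_add_distrib hf (.sum (fun i => hterm i) _),
    finsum_sum_comm _ _ fun i _ => hterm i, Finset.sum_mul]
  congr 1
  refine Finset.sum_congr rfl fun i _ => ?_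
  rw [← mul_finsum' _ _ (hg.comp_add_right (t i)), finsum_comp_add_right]

end LiftingStep

theorem finsum_eq_finsum_two_mul_add_finsum_two_mul_add_one {M : Type*} [AddCommMonoid M]
    {f : ℤ → M} (hf : f.HasFiniteSupport) :
    ∑ᶠ j, f j = ∑ᶠ k, f (2 * k) + ∑ᶠ k, f (2 * k + 1) := by
  have hcover : Set.range (2 * · : ℤ → ℤ) ∪ Set.range (2 * · + 1 : ℤ → ℤ) = Set.univ := by
    refine Set.eq_univ_of_forall fun j => ?_
    rcases Int.even_or_odd' j with ⟨k, rfl | rfl⟩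
    exacts [Or.inl ⟨k, rfl⟩, Or.inr ⟨k, rfl⟩]
  have hdisj : Disjoint (Set.range (2 * · : ℤ → ℤ)) (Set.range (2 * · + 1 : ℤ → ℤ)) := by
    rw [Set.disjoint_left]
    rintro _ ⟨a, rfl⟩ ⟨b, hb⟩
    simp only at hb
    omega
  rw [← finsum_mem_univ f, ← hcover,
    finsum_mem_union' hdisj (hf.inter_of_right _) (hf.inter_of_right _),
    finsum_mem_range fun a b h => by simpa using h,
    finsum_mem_range fun a b h => by simpa using h]

/-- Conservation of the zeroth discrete moment across levels by the lifted
sixth-order (6.2) interpolating wavelet. -/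
theorem wavelet_6_2_conserves_zeroth_moment
    (lam : ℤ → ℝ) (hfin : (Function.support lam).Finite)
    (γ : ℤ → ℝ)
    (hγ : ∀ m : ℤ, γ m =
      lam (2 * m + 1) - (3 / 256) * lam (2 * m - 4) + (25 / 256) * lam (2 * m - 2)
        - (75 / 128) * lam (2 * m) - (75 / 128) * lam (2 * m + 2)
        + (25 / 256) * lam (2 * m + 4) - (3 / 256) * lam (2 * m + 6))
    (lam' : ℤ → ℝ)
    (hlam' : ∀ k : ℤ, lam' k =
      lam (2 * k) + (3 / 512) * γ (k + 2) - (25 / 512) * γ (k + 1)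
        + (75 / 256) * γ k + (75 / 256) * γ (k - 1)
        - (25 / 512) * γ (k - 2) + (3 / 512) * γ (k - 3)) :
    ∑ᶠ j : ℤ, lam j = 2 * ∑ᶠ k : ℤ, lam' k := by
  have hlam : lam.HasFiniteSupport := hfin
  set e : ℤ → ℝ := fun k => lam (2 * k)
  set o : ℤ → ℝ := fun k => lam (2 * k + 1)
  have he : e.HasFiniteSupport :=
    hlam.comp_of_injective (g := (2 * ·)) fun a b h => by simpa using h
  have ho : o.HasFiniteSupport :=
    hlam.comp_of_injective (g := (2 * · + 1)) fun a b h => by simpa using h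
  have hpredict : γ = liftingStep o e ![-3/256, 25/256, -75/128, -75/128, 25/256, -3/256]
      ![-2, -1, 0, 1, 2, 3] := by
    funext m
    simp only [hγ, liftingStep, Fin.sum_univ_six, Matrix.cons_val, e, o]
    ring_nf
  have hupdate : lam' = liftingStep e γ ![3/512, -25/512, 75/256, 75/256, -25/512, 3/512]
      ![2, 1, 0, -1, -2, -3] := by
    funext k
    simp only [hlam', liftingStep, Fin.sum_univ_six, Matrix.cons_val, e]
    ring_nf
  have hγsum : ∑ᶠ m, γ m = ∑ᶠ k, o k - ∑ᶠ k, e k := by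
    rw [hpredict, finsum_liftingStep ho he]
    simp only [Fin.sum_univ_six, Matrix.cons_val]
    ring
  rw [finsum_eq_finsum_two_mul_add_finsum_two_mul_add_one hlam, hupdate,
    finsum_liftingStep he (hpredict ▸ ho.liftingStep he _ _), hγsum]
  simp only [Fin.sum_univ_six, Matrix.cons_val]
  ring
end

section
/- Let λ : ℤ → ℝ be finitely supported, let λ' be its coarse scaling coefficients under the 2.2 forward wavelet transform, and let λ̂ : ℤ → ℝ be the reconstruction from λ' with all detail coefficients set to zero, i.e. λ̂(2k) = λ'(k) and λ̂(2m+1) = (1/2)·(λ̂(2m) + λ̂(2m+2)). Then Σ_{j∈ℤ} λ̂(j) = Σ_{j∈ℤ} λ(j). (Discarding all detail coefficients in the lifted second-order interpolating wavelet transform leaves the zeroth discrete moment of the signal exactly unchanged, in contrast to non-lifted interpolating wavelets.) -/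
/-!
Each even sample enters the predictions of its two odd neighbours with weight 1/2, so the
details sum to `∑ odd - ∑ even`, and the update step, which spreads each detail with weight 1/4
onto two coarse coefficients, gives `∑ λ' = ∑ even + (∑ odd - ∑ even) / 2 = (∑ λ) / 2`.
Reconstruction with zero details is linear interpolation of the `λ'`: each coarse coefficient
appears once at an even point and with weight 1/2 at each of its two odd neighbours, so it
doubles the sum back to `∑ λ`.
-/

open Function Set

section FinsumInt

variable {M : Type*} [AddCommMonoid M]

theorem finsum_comp_add_right_s19 (f : ℤ → M) (c : ℤ) : ∑ᶠ k, f (k + c) = ∑ᶠ k, f k :=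
  finsum_comp_equiv (Equiv.addRight c)

theorem finsum_add_comp_add {f : ℤ → M} (hf : f.HasFiniteSupport) (c : ℤ) :
    ∑ᶠ k, (f k + f (k + c)) = 2 • ∑ᶠ k, f k := by
  rw [finsum_add_distrib hf (hf.fun_comp_of_injective (add_left_injective c)),
    finsum_comp_add_right_s19, two_nsmul]

theorem Int.range_two_mul_union_range_two_mul_add_one :
    Set.range (fun k : ℤ => 2 * k) ∪ Set.range (fun k : ℤ => 2 * k + 1) = univ := by
  refine eq_univ_of_forall fun j => ?_
  rcases Int.even_or_odd' j with ⟨k, rfl | rfl⟩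
  · exact Or.inl ⟨k, rfl⟩
  · exact Or.inr ⟨k, rfl⟩

theorem Int.disjoint_range_two_mul_range_two_mul_add_one :
    Disjoint (Set.range fun k : ℤ => 2 * k) (Set.range fun k : ℤ => 2 * k + 1) := by
  rw [disjoint_left]
  rintro _ ⟨a, rfl⟩ ⟨b, hb⟩
  dsimp only at hb
  omega

theorem finsum_comp_two_mul_add_finsum_comp_two_mul_add_one {f : ℤ → M}
    (hf : f.HasFiniteSupport) :
    ∑ᶠ k, f (2 * k) + ∑ᶠ k, f (2 * k + 1) = ∑ᶠ j, f j := by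
  rw [← finsum_mem_univ f, ← Int.range_two_mul_union_range_two_mul_add_one,
    finsum_mem_union' Int.disjoint_range_two_mul_range_two_mul_add_one
      (hf.inter_of_right _) (hf.inter_of_right _),
    finsum_mem_range fun a b h => by omega, finsum_mem_range fun a b h => by omega]

theorem hasFiniteSupport_of_comp_two_mul_of_comp_two_mul_add_one {f : ℤ → M}
    (heven : HasFiniteSupport fun k => f (2 * k))
    (hodd : HasFiniteSupport fun k => f (2 * k + 1)) : f.HasFiniteSupport := by
  refine ((heven.image (2 * ·)).union (hodd.image (2 * · + 1))).subset fun j hj => ?_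
  rcases Int.even_or_odd' j with ⟨k, rfl | rfl⟩
  · exact Or.inl ⟨k, hj, rfl⟩
  · exact Or.inr ⟨k, hj, rfl⟩

end FinsumInt

namespace Wavelet22

variable {K : Type*} [Field K]

def detail (lam : ℤ → K) (m : ℤ) : K :=
  lam (2 * m + 1) - (1 / 2) * (lam (2 * m) + lam (2 * m + 2))

def coarse (lam : ℤ → K) (k : ℤ) : K :=
  lam (2 * k) + (1 / 4) * (detail lam (k - 1) + detail lam k)

variable {lam : ℤ → K}

theorem hasFiniteSupport_detail (hlam : lam.HasFiniteSupport) :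
    (detail lam).HasFiniteSupport := by
  unfold detail
  fun_prop (disch := intro a b h; dsimp only at h; omega)

theorem hasFiniteSupport_coarse (hlam : lam.HasFiniteSupport) :
    (coarse lam).HasFiniteSupport := by
  have := hasFiniteSupport_detail hlam
  unfold coarse
  fun_prop (disch := intro a b h; dsimp only at h; omega)

theorem finsum_detail [CharZero K] (hlam : lam.HasFiniteSupport) :
    ∑ᶠ m, detail lam m = ∑ᶠ m, lam (2 * m + 1) - ∑ᶠ k, lam (2 * k) := by
  have hneighbours : ∑ᶠ m, (lam (2 * m) + lam (2 * m + 2)) = 2 * ∑ᶠ k, lam (2 * k) := by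
    simpa only [mul_add, mul_one, nsmul_eq_mul, Nat.cast_ofNat] using
      finsum_add_comp_add (f := fun k => lam (2 * k))
        (hlam.fun_comp_of_injective fun a b h => by omega) 1
  unfold detail
  rw [finsum_sub_distrib (by fun_prop (disch := intro a b h; dsimp only at h; omega))
    (by fun_prop (disch := intro a b h; dsimp only at h; omega)), ← mul_finsum, hneighbours]
  ring

theorem two_mul_finsum_coarse [CharZero K] (hlam : lam.HasFiniteSupport) :
    2 * ∑ᶠ k, coarse lam k = ∑ᶠ j, lam j := by
  have hdetail := hasFiniteSupport_detail hlam
  have hneighbours : ∑ᶠ k, (detail lam (k - 1) + detail lam k) = 2 * ∑ᶠ m, detail lam m := by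
    rw [← finsum_comp_add_right_s19 (fun k => detail lam (k - 1) + detail lam k) 1]
    simp only [add_sub_cancel_right]
    rw [finsum_add_comp_add hdetail, two_nsmul, two_mul]
  unfold coarse
  rw [finsum_add_distrib (hlam.fun_comp_of_injective fun a b h => by omega)
    (by fun_prop (disch := intro a b h; dsimp only at h; omega)), ← mul_finsum, hneighbours,
    finsum_detail hlam, ← finsum_comp_two_mul_add_finsum_comp_two_mul_add_one hlam]
  ring

theorem finsum_eq_two_mul_finsum_of_interpolating [CharZero K] {f μ : ℤ → K}
    (hμ : μ.HasFiniteSupport) (heven : ∀ k, f (2 * k) = μ k)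
    (hodd : ∀ m, f (2 * m + 1) = (1 / 2) * (f (2 * m) + f (2 * m + 2))) :
    ∑ᶠ j, f j = 2 * ∑ᶠ k, μ k := by
  have hodd' : ∀ m, f (2 * m + 1) = (1 / 2) * (μ m + μ (m + 1)) := fun m => by
    rw [hodd, show 2 * m + 2 = 2 * (m + 1) by ring, heven, heven]
  have hf : f.HasFiniteSupport :=
    hasFiniteSupport_of_comp_two_mul_of_comp_two_mul_add_one
      (by simpa only [heven] using hμ)
      (by simp only [hodd']; fun_prop (disch := intro a b h; dsimp only at h; omega))
  rw [← finsum_comp_two_mul_add_finsum_comp_two_mul_add_one hf, finsum_congr heven,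
    finsum_congr hodd', ← mul_finsum, finsum_add_comp_add hμ, nsmul_eq_mul]
  push_cast
  ring

end Wavelet22

/-- Discarding all detail coefficients in the lifted second-order (2.2)
interpolating wavelet transform leaves the zeroth discrete moment of the signal
exactly unchanged. -/
theorem wavelet_2_2_compression_conserves_zeroth_moment
    (lam : ℤ → ℝ) (hfin : (Function.support lam).Finite)
    (γ : ℤ → ℝ)
    (hγ : ∀ m : ℤ, γ m = lam (2 * m + 1) - (1 / 2) * (lam (2 * m) + lam (2 * m + 2)))
    (lam' : ℤ → ℝ)
    (hlam' : ∀ k : ℤ, lam' k = lam (2 * k) + (1 / 4) * (γ (k - 1) + γ k))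
    (lamhat : ℤ → ℝ)
    (hhat_even : ∀ k : ℤ, lamhat (2 * k) = lam' k)
    (hhat_odd : ∀ m : ℤ, lamhat (2 * m + 1) = (1 / 2) * (lamhat (2 * m) + lamhat (2 * m + 2))) :
    ∑ᶠ j : ℤ, lamhat j = ∑ᶠ j : ℤ, lam j := by
  obtain rfl : γ = Wavelet22.detail lam := funext hγ
  obtain rfl : lam' = Wavelet22.coarse lam := funext hlam'
  rw [Wavelet22.finsum_eq_two_mul_finsum_of_interpolating
    (Wavelet22.hasFiniteSupport_coarse hfin) hhat_even hhat_odd,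
    Wavelet22.two_mul_finsum_coarse hfin]
end
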